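/- arXiv:1309.1535 — 4 statements merged into one kernel-verified Lean document; each statement's English description precedes it below -/
import Mathlib

section
/- (Summability lemma, maximization part) For every strictly increasing sequence of integers (a_j)_{j∈ℤ}, the sum S((a_j)) is at most S((j)), i.e. the value of S for the sequence a_j = j. -/
open scoped BigOperators ENNReal

noncomputable section

/-- The truncated expression `C(x)₊^d = max{C (max{x,0})^d, 1}`. -/
def Cplus (C : ℝ) (d : ℕ) (x : ℝ) : ℝ := max (C * (max x 0) ^ d) 1

/-- The Euclidean norm of a lattice point `n' ∈ ℤ^k`. -/
def latNorm (k : ℕ) (n' : Fin k → ℤ) : ℝ := Real.sqrt (∑ i, ((n' i : ℝ)) ^ 2)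

/-- The summand of the double series `S((a_j))`, indexed by `n' ∈ ℤ^{d-1}` and `j ∈ ℤ`. -/
def Sterm (d : ℕ) (C c₁ lam c₂ : ℝ) (a : ℤ → ℤ) (n' : Fin (d - 1) → ℤ) (j : ℤ) : ℝ :=
  (Cplus C d (lam⁻¹ * Real.sqrt ((latNorm (d - 1) n') ^ 2 + ((a j : ℝ)) ^ 2) - c₁))⁻¹ -
    min ((C * (c₂ + ((a j : ℝ) - (a (j - 1) : ℝ)) + c₁) ^ d)⁻¹)
      ((C * (lam⁻¹ * Real.sqrt ((latNorm (d - 1) n') ^ 2 + ((a j : ℝ)) ^ 2) +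
        ((a j : ℝ) - (a (j - 1) : ℝ)) + c₁) ^ d)⁻¹)

/-- The double series `S((a_j))`, valued in `[0,∞]`. -/
def Ssum (d : ℕ) (C c₁ lam c₂ : ℝ) (a : ℤ → ℤ) : ℝ≥0∞ :=
  ∑' p : (Fin (d - 1) → ℤ) × ℤ, ENNReal.ofReal (Sterm d C c₁ lam c₂ a p.1 p.2)

/-- Difference of inverse powers is antitone: convexity-type inequality. -/
lemma inv_pow_diff_anti (d : ℕ) {u v L : ℝ} (hu : 0 < u) (huv : u ≤ v) (hL : 0 ≤ L) :
    (v ^ d)⁻¹ - ((v + L) ^ d)⁻¹ ≤ (u ^ d)⁻¹ - ((u + L) ^ d)⁻¹ := by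
  have hv : 0 < v := lt_of_lt_of_le hu huv
  have huL : 0 < u + L := by linarith
  have hvL : 0 < v + L := by linarith
  induction d with
  | zero => simp
  | succ d ih =>
    have h1 : (v ^ (d+1))⁻¹ - ((v + L) ^ (d+1))⁻¹
        = v⁻¹ * ((v ^ d)⁻¹ - ((v + L) ^ d)⁻¹) + ((v+L)^d)⁻¹ * (v⁻¹ - (v+L)⁻¹) := by
      field_simp
      ring
    have h2 : (u ^ (d+1))⁻¹ - ((u + L) ^ (d+1))⁻¹
        = u⁻¹ * ((u ^ d)⁻¹ - ((u + L) ^ d)⁻¹) + ((u+L)^d)⁻¹ * (u⁻¹ - (u+L)⁻¹) := by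
      field_simp
      ring
    rw [h1, h2]
    have hAv : 0 ≤ (v ^ d)⁻¹ - ((v + L) ^ d)⁻¹ := by
      have : v ^ d ≤ (v + L) ^ d := pow_le_pow_left₀ hv.le (by linarith) d
      have := inv_anti₀ (pow_pos hv d) this
      linarith
    have hBv : 0 ≤ v⁻¹ - (v+L)⁻¹ := by
      have := inv_anti₀ hv (by linarith : v ≤ v + L)
      linarith
    have h3 : v⁻¹ ≤ u⁻¹ := inv_anti₀ hu huv
    have h4 : ((v+L)^d)⁻¹ ≤ ((u+L)^d)⁻¹ :=
      inv_anti₀ (pow_pos huL d) (pow_le_pow_left₀ huL.le (by linarith) d)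
    have h5 : v⁻¹ - (v+L)⁻¹ ≤ u⁻¹ - (u+L)⁻¹ := by
      rw [inv_sub_inv hv.ne' hvL.ne', inv_sub_inv hu.ne' huL.ne']
      have e1 : v + L - v = L := by ring
      have e2 : u + L - u = L := by ring
      rw [e1, e2]
      apply div_le_div_of_nonneg_left hL (by positivity)
      nlinarith
    exact add_le_add (mul_le_mul h3 ih hAv (inv_nonneg.mpr hu.le))
      (mul_le_mul h4 h5 hBv (inv_nonneg.mpr (pow_pos huL d).le))

/-- `x ↦ √(N + x²)` is 1-Lipschitz. -/
lemma sqrt_add_sq_lipschitz {N x y : ℝ} (hN : 0 ≤ N) :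
    Real.sqrt (N + x ^ 2) ≤ Real.sqrt (N + y ^ 2) + |x - y| := by
  have h0 : 0 ≤ Real.sqrt (N + y ^ 2) + |x - y| := by positivity
  have hy : |y| ≤ Real.sqrt (N + y ^ 2) := by
    rw [← Real.sqrt_sq_eq_abs]
    exact Real.sqrt_le_sqrt (by nlinarith)
  have : N + x ^ 2 ≤ (Real.sqrt (N + y ^ 2) + |x - y|) ^ 2 := by
    have hsq : Real.sqrt (N + y ^ 2) ^ 2 = N + y ^ 2 := Real.sq_sqrt (by positivity)
    nlinarith [abs_nonneg (x - y), sq_abs (x - y), sq_abs y, abs_nonneg y,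
      abs_mul y (x - y), le_abs_self (y * (x - y))]
  calc Real.sqrt (N + x ^ 2) ≤ Real.sqrt ((Real.sqrt (N + y ^ 2) + |x - y|) ^ 2) :=
        Real.sqrt_le_sqrt this
    _ = Real.sqrt (N + y ^ 2) + |x - y| := Real.sqrt_sq h0

/-- Simplification of a single `Sterm`-type expression. -/
lemma Sterm_simp (d : ℕ) (C c₁ c₂ : ℝ) (hC : 0 < C) (hc₁ : 0 ≤ c₁) (hc₂ : c₁ < c₂)
    (hc₂def : C * (c₂ - c₁) ^ d = 1) (r δ : ℝ) (hr : 0 ≤ r) (hδ : 1 ≤ δ) :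
    (Cplus C d (r - c₁))⁻¹ -
      min ((C * (c₂ + δ + c₁) ^ d)⁻¹) ((C * (r + δ + c₁) ^ d)⁻¹)
    = (C * (max r c₂ - c₁) ^ d)⁻¹ - (C * (max r c₂ + δ + c₁) ^ d)⁻¹ := by
  have hc₂0 : 0 < c₂ := lt_of_le_of_lt hc₁ hc₂
  have h1 : Cplus C d (r - c₁) = C * (max r c₂ - c₁) ^ d := by
    unfold Cplus
    rcases le_total r c₂ with h | h
    · rw [max_eq_right h]
      have hmax : max (r - c₁) 0 ≤ c₂ - c₁ := by
        apply max_le (by linarith) (by linarith)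
      have : C * max (r - c₁) 0 ^ d ≤ C * (c₂ - c₁) ^ d := by
        apply mul_le_mul_of_nonneg_left (pow_le_pow_left₀ (le_max_right _ _) hmax d) hC.le
      rw [max_eq_right (by linarith [hc₂def])]
      rw [← hc₂def]
    · rw [max_eq_left h]
      have h2 : max (r - c₁) 0 = r - c₁ := max_eq_left (by linarith)
      rw [h2]
      have : C * (c₂ - c₁) ^ d ≤ C * (r - c₁) ^ d := by
        apply mul_le_mul_of_nonneg_left (pow_le_pow_left₀ (by linarith) (by linarith) d) hC.le
      rw [max_eq_left (by linarith [hc₂def])]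
  rw [h1]
  congr 1
  rcases le_total r c₂ with h | h
  · rw [max_eq_right h, min_eq_left]
    apply inv_anti₀ (by positivity)
    exact mul_le_mul_of_nonneg_left (pow_le_pow_left₀ (by linarith) (by linarith) d) hC.le
  · rw [max_eq_left h, min_eq_right]
    apply inv_anti₀ (by positivity)
    exact mul_le_mul_of_nonneg_left (pow_le_pow_left₀ (by linarith) (by linarith) d) hC.le

/-- Per-block inequality: a term with gap `Δ` is dominated by `Δ` unit-gap terms. -/
lemma block_ineq (d : ℕ) (C c₁ c₂ : ℝ) (hC : 0 < C) (hc₁ : 0 ≤ c₁) (hc₂ : c₁ < c₂)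
    (R : ℤ → ℝ) (hR : ∀ k, c₂ ≤ R k) (hLip : ∀ (k : ℤ) (i : ℕ), R (k - i) ≤ R k + i)
    (m : ℤ) (Δ : ℕ) (hΔ : 1 ≤ Δ) :
    (C * (R m - c₁) ^ d)⁻¹ - (C * (R m + Δ + c₁) ^ d)⁻¹
      ≤ ∑ i ∈ Finset.range Δ,
          ((C * (R (m - i) - c₁) ^ d)⁻¹ - (C * (R (m - i) + 1 + c₁) ^ d)⁻¹) := by
  set s : ℝ := R m - c₁ with hs_def
  have hs : 0 < s := by have := hR m; simp only [hs_def]; linarith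
  set L : ℝ := 1 + 2 * c₁ with hL_def
  have hL1 : 1 ≤ L := by simp [hL_def]; linarith
  have hL0 : 0 ≤ L := by linarith
  -- Step 1: replace right endpoint
  have hRm := hR m
  have hΔ0 : (0:ℝ) ≤ (Δ:ℝ) := Nat.cast_nonneg Δ
  have step1 : (C * (s + Δ * L) ^ d)⁻¹ ≤ (C * (R m + Δ + c₁) ^ d)⁻¹ := by
    apply inv_anti₀ (mul_pos hC (pow_pos (by linarith : (0:ℝ) < R m + ↑Δ + c₁) d))
    apply mul_le_mul_of_nonneg_left _ hC.le
    apply pow_le_pow_left₀ (by nlinarith [mul_nonneg hΔ0 hL0])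
    have hΔ1 : (1 : ℝ) ≤ (Δ : ℝ) := by exact_mod_cast hΔ
    have : (Δ : ℝ) + 2 * c₁ ≤ (Δ : ℝ) * L := by
      rw [hL_def]; nlinarith
    simp only [hs_def]; linarith
  -- Step 2: telescoping sum
  have tele : ∑ i ∈ Finset.range Δ,
        ((C * (s + i * L) ^ d)⁻¹ - (C * (s + (i + 1) * L) ^ d)⁻¹)
      = (C * s ^ d)⁻¹ - (C * (s + Δ * L) ^ d)⁻¹ := by
    have := Finset.sum_range_sub' (fun i : ℕ => (C * (s + i * L) ^ d)⁻¹) Δ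
    simpa using this
  -- Step 3: termwise comparison
  have step3 : ∀ i ∈ Finset.range Δ,
      (C * (s + i * L) ^ d)⁻¹ - (C * (s + (i + 1) * L) ^ d)⁻¹
        ≤ (C * (R (m - i) - c₁) ^ d)⁻¹ - (C * (R (m - i) + 1 + c₁) ^ d)⁻¹ := by
    intro i _
    have hu : 0 < R (m - i) - c₁ := by have := hR (m - i); linarith
    have huv : R (m - i) - c₁ ≤ s + i * L := by
      have h1 := hLip m i
      have h2 : (i : ℝ) ≤ i * L := le_mul_of_one_le_right (Nat.cast_nonneg i) hL1
      simp only [hs_def]; linarith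
    have key := inv_pow_diff_anti d hu huv hL0
    have e1 : R (m - i) - c₁ + L = R (m - i) + 1 + c₁ := by rw [hL_def]; ring
    have e2 : s + i * L + L = s + (i + 1) * L := by ring
    rw [e1, e2] at key
    have hCinv : (0:ℝ) ≤ C⁻¹ := inv_nonneg.mpr hC.le
    have expand : ∀ t : ℝ, (C * t ^ d)⁻¹ = C⁻¹ * (t ^ d)⁻¹ := fun t => mul_inv C _
    rw [expand, expand, expand, expand]
    calc C⁻¹ * ((s + i * L) ^ d)⁻¹ - C⁻¹ * ((s + (i+1) * L) ^ d)⁻¹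
        = C⁻¹ * (((s + i * L) ^ d)⁻¹ - ((s + (i+1) * L) ^ d)⁻¹) := by ring
      _ ≤ C⁻¹ * (((R (m - i) - c₁) ^ d)⁻¹ - ((R (m - i) + 1 + c₁) ^ d)⁻¹) :=
          mul_le_mul_of_nonneg_left key hCinv
      _ = _ := by ring
  calc (C * (R m - c₁) ^ d)⁻¹ - (C * (R m + Δ + c₁) ^ d)⁻¹
      ≤ (C * s ^ d)⁻¹ - (C * (s + Δ * L) ^ d)⁻¹ := by
        simp only [hs_def]; linarith [step1]
    _ = ∑ i ∈ Finset.range Δ,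
          ((C * (s + i * L) ^ d)⁻¹ - (C * (s + (i + 1) * L) ^ d)⁻¹) := tele.symm
    _ ≤ _ := Finset.sum_le_sum step3

/-- **Summability lemma (maximization part)**: among strictly increasing integer
sequences `(a_j)`, the sum `S((a_j))` is maximized by the sequence `a_j = j`. -/
theorem Ssum_le_id (d : ℕ) (hd : 1 ≤ d) (C c₁ lam c₂ : ℝ)
    (hC : 0 < C) (hc₁ : 0 ≤ c₁) (hlam : 1 ≤ lam) (hc₂ : c₁ < c₂)
    (hc₂def : C * (c₂ - c₁) ^ d = 1)
    (a : ℤ → ℤ) (ha : StrictMono a) :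
    Ssum d C c₁ lam c₂ a ≤ Ssum d C c₁ lam c₂ (fun j => j) := by
  have hc₂0 : 0 < c₂ := lt_of_le_of_lt hc₁ hc₂
  have hlam0 : 0 < lam := lt_of_lt_of_le one_pos hlam
  have hlaminv : lam⁻¹ ≤ 1 := inv_le_one_of_one_le₀ hlam
  have hlaminv0 : 0 ≤ lam⁻¹ := by positivity
  unfold Ssum
  rw [ENNReal.tsum_prod', ENNReal.tsum_prod']
  refine ENNReal.tsum_le_tsum fun n' => ?_
  set N : ℝ := (latNorm (d - 1) n') ^ 2 with hN_def
  have hN : 0 ≤ N := sq_nonneg _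
  set R : ℤ → ℝ := fun k => max (lam⁻¹ * Real.sqrt (N + (k : ℝ) ^ 2)) c₂ with hR_def
  have hRc₂ : ∀ k, c₂ ≤ R k := fun k => le_max_right _ _
  have hLip : ∀ (k : ℤ) (i : ℕ), R (k - i) ≤ R k + i := by
    intro k i
    have hi0 : (0:ℝ) ≤ (i:ℝ) := Nat.cast_nonneg i
    have habs : |((k : ℝ) - i) - (k : ℝ)| = (i : ℝ) := by
      rw [show ((k : ℝ) - i) - (k : ℝ) = -(i:ℝ) by ring, abs_neg, abs_of_nonneg hi0]
    have h1 : Real.sqrt (N + ((k : ℝ) - i) ^ 2) ≤ Real.sqrt (N + (k : ℝ) ^ 2) + i := by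
      have h := sqrt_add_sq_lipschitz (N := N) (x := (k : ℝ) - i) (y := (k : ℝ)) hN
      rwa [habs] at h
    have h2 : lam⁻¹ * Real.sqrt (N + ((k : ℝ) - i) ^ 2)
        ≤ lam⁻¹ * Real.sqrt (N + (k : ℝ) ^ 2) + i := by
      have h3 : lam⁻¹ * (i:ℝ) ≤ (i:ℝ) := mul_le_of_le_one_left hi0 hlaminv
      nlinarith [mul_le_mul_of_nonneg_left h1 hlaminv0]
    have hcast : ((k - (i:ℤ) : ℤ) : ℝ) = (k:ℝ) - (i:ℝ) := by push_cast; ring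
    simp only [hR_def, hcast]
    apply max_le
    · exact le_trans h2 (by gcongr; exact le_max_left _ _)
    · have : c₂ ≤ max (lam⁻¹ * Real.sqrt (N + (k:ℝ)^2)) c₂ := le_max_right _ _
      linarith
  -- per-term formula for general strictly increasing sequence
  have hterm : ∀ (b : ℤ → ℤ), (∀ j : ℤ, b (j - 1) < b j) → ∀ j : ℤ,
      Sterm d C c₁ lam c₂ b n' j
        = (C * (R (b j) - c₁) ^ d)⁻¹
          - (C * (R (b j) + ((b j : ℝ) - (b (j-1) : ℝ)) + c₁) ^ d)⁻¹ := by
    intro b hb j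
    have hδ : (1:ℝ) ≤ (b j : ℝ) - (b (j-1) : ℝ) := by
      have h : (b (j-1) : ℝ) + 1 ≤ (b j : ℝ) := by exact_mod_cast Int.add_one_le_iff.mpr (hb j)
      linarith
    have h := Sterm_simp d C c₁ c₂ hC hc₁ hc₂ hc₂def
        (lam⁻¹ * Real.sqrt (N + ((b j : ℤ) : ℝ) ^ 2)) ((b j : ℝ) - (b (j-1) : ℝ))
        (by positivity) hδ
    unfold Sterm
    rw [← hN_def]
    simp only [hR_def]
    convert h using 3
  -- formula for the identity sequence
  have hid : ∀ k : ℤ, Sterm d C c₁ lam c₂ (fun j => j) n' k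
      = (C * (R k - c₁) ^ d)⁻¹ - (C * (R k + 1 + c₁) ^ d)⁻¹ := by
    intro k
    have h := hterm (fun j => j) (fun j => by show j - 1 < j; omega) k
    rw [h]
    have e1 : ((k : ℝ)) - ((k - 1 : ℤ) : ℝ) = 1 := by push_cast; ring
    rw [e1]
  have hRk : ∀ k : ℤ, 0 < R k - c₁ := fun k => by have := hRc₂ k; linarith
  have hidnn : ∀ k : ℤ, 0 ≤ (C * (R k - c₁) ^ d)⁻¹ - (C * (R k + 1 + c₁) ^ d)⁻¹ := by
    intro k
    have h1 := hRk k
    have h2 : (C * (R k + 1 + c₁) ^ d)⁻¹ ≤ (C * (R k - c₁) ^ d)⁻¹ := by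
      apply inv_anti₀ (mul_pos hC (pow_pos h1 d))
      exact mul_le_mul_of_nonneg_left (pow_le_pow_left₀ h1.le (by linarith) d) hC.le
    linarith
  set g : ℤ → ℝ≥0∞ := fun k =>
    ENNReal.ofReal ((C * (R k - c₁) ^ d)⁻¹ - (C * (R k + 1 + c₁) ^ d)⁻¹) with hg_def
  -- Step A : each term of the a-sequence is dominated by a block of unit terms
  have stepA : ∀ j : ℤ, ENNReal.ofReal (Sterm d C c₁ lam c₂ a n' j)
      ≤ ∑ i ∈ Finset.range ((a j - a (j - 1)).toNat), g (a j - i) := by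
    intro j
    have hΔpos : 0 < a j - a (j - 1) := sub_pos.mpr (ha (sub_one_lt j))
    have hΔ1 : 1 ≤ (a j - a (j - 1)).toNat := by omega
    have hcast : (((a j - a (j - 1)).toNat : ℕ) : ℝ) = (a j : ℝ) - (a (j - 1) : ℝ) := by
      have := Int.toNat_of_nonneg hΔpos.le
      exact_mod_cast congrArg (fun z : ℤ => (z : ℝ)) this
    have hblock := block_ineq d C c₁ c₂ hC hc₁ hc₂ R hRc₂ hLip (a j)
      ((a j - a (j - 1)).toNat) hΔ1
    rw [hterm a (fun j => ha (sub_one_lt j)) j]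
    calc ENNReal.ofReal ((C * (R (a j) - c₁) ^ d)⁻¹
            - (C * (R (a j) + ((a j : ℝ) - (a (j-1) : ℝ)) + c₁) ^ d)⁻¹)
        ≤ ENNReal.ofReal (∑ i ∈ Finset.range ((a j - a (j - 1)).toNat),
            ((C * (R (a j - i) - c₁) ^ d)⁻¹ - (C * (R (a j - i) + 1 + c₁) ^ d)⁻¹)) := by
          apply ENNReal.ofReal_le_ofReal
          rw [← hcast]
          exact hblock
      _ = ∑ i ∈ Finset.range ((a j - a (j - 1)).toNat), g (a j - i) :=
          ENNReal.ofReal_sum_of_nonneg (fun i _ => hidnn (a j - i))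
  -- Step B : the blocks are disjoint, so the total is at most the full sum
  have stepB : ∑' j : ℤ, ∑ i ∈ Finset.range ((a j - a (j - 1)).toNat), g (a j - i)
      ≤ ∑' k : ℤ, g k := by
    set S : Set (ℤ × ℕ) := {p | p.2 < (a p.1 - a (p.1 - 1)).toNat} with hS_def
    set G : ℤ × ℕ → ℝ≥0∞ := fun p =>
      if p.2 < (a p.1 - a (p.1 - 1)).toNat then g (a p.1 - p.2) else 0 with hG_def
    have h1 : ∀ j : ℤ, ∑ i ∈ Finset.range ((a j - a (j - 1)).toNat), g (a j - i)
        = ∑' i : ℕ, G (j, i) := by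
      intro j
      rw [tsum_eq_sum (s := Finset.range ((a j - a (j - 1)).toNat))
        (f := fun i => G (j, i)) (fun i hi => by
          simp only [hG_def]
          exact if_neg (fun h => hi (Finset.mem_range.mpr h)))]
      exact Finset.sum_congr rfl fun i hi => by
        simp only [hG_def]
        exact (if_pos (Finset.mem_range.mp hi)).symm
    have hsupp : Function.support G ⊆ S := by
      intro p hp
      simp only [hS_def, Set.mem_setOf_eq]
      by_contra hcon
      exact hp (by simp only [hG_def]; exact if_neg hcon)
    have hinj : Function.Injective (fun p : S => a p.1.1 - (p.1.2 : ℤ)) := by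
      rintro ⟨⟨j, i⟩, hp⟩ ⟨⟨j', i'⟩, hp'⟩ h
      simp only [hS_def, Set.mem_setOf_eq] at hp hp'
      simp only at h
      have hi : (i : ℤ) < a j - a (j - 1) := by omega
      have hi' : (i' : ℤ) < a j' - a (j' - 1) := by omega
      have hjj' : j = j' := by
        by_contra hne
        rcases lt_or_gt_of_ne hne with hlt | hgt
        · have : a j ≤ a (j' - 1) := ha.monotone (by omega)
          omega
        · have : a j' ≤ a (j - 1) := ha.monotone (by omega)
          omega
      subst hjj'
      have : i = i' := by omega
      subst this
      rfl
    calc ∑' j : ℤ, ∑ i ∈ Finset.range ((a j - a (j - 1)).toNat), g (a j - i)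
        = ∑' j : ℤ, ∑' i : ℕ, G (j, i) := tsum_congr h1
      _ = ∑' p : ℤ × ℕ, G p := ENNReal.tsum_prod'.symm
      _ = ∑' p : S, G p := (tsum_subtype_eq_of_support_subset hsupp).symm
      _ = ∑' p : S, g (a p.1.1 - (p.1.2 : ℤ)) := by
          refine tsum_congr fun p => ?_
          have hp := p.2
          simp only [hS_def, Set.mem_setOf_eq] at hp
          simp only [hG_def]
          exact if_pos hp
      _ ≤ ∑' k : ℤ, g k :=
          ENNReal.tsum_comp_le_tsum_of_injective hinj g
  calc ∑' j : ℤ, ENNReal.ofReal (Sterm d C c₁ lam c₂ a (n', j).1 (n', j).2)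
      ≤ ∑' j : ℤ, ∑ i ∈ Finset.range ((a j - a (j - 1)).toNat), g (a j - i) :=
        ENNReal.tsum_le_tsum stepA
    _ ≤ ∑' k : ℤ, g k := stepB
    _ = ∑' k : ℤ, ENNReal.ofReal (Sterm d C c₁ lam c₂ (fun j => j) (n', k).1 (n', k).2) := by
        refine tsum_congr fun k => ?_
        simp only [hg_def]
        rw [← hid k]

end
end

section
/- (Summability lemma, finiteness part) For the sequence a_j = j, the sum S((j)) is finite; indeed S((j)) ≤ #{n ∈ ℤ^d : λ⁻¹|n| ≤ c₂} + Σ_{n ∈ ℤ^d, λ⁻¹|n| > c₂} ( 1/(C(λ⁻¹|n| − c₁)^d) − 1/(C(λ⁻¹|n| + 1 + c₁)^d) ) < ∞. Consequently S((a_j)) < ∞ for every strictly increasing integer sequence (a_j)_{j∈ℤ}. -/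
/-!
With `ψ y = (C y^d)⁻¹` and `ρ = max (λ⁻¹ |(n', a_j)|) c₂ - c₁`, the normalisation
`C (c₂ - c₁)^d = 1` turns the `(n', j)` term of `S((a_j))` into `ψ ρ - ψ (ρ + g + 2 c₁)`, where
`g = a_j - a_{j-1}`.

For `a_j = j` the gap is `1`, and the term is attached to the lattice point `(j, n') ∈ ℤ^d`: it is
at most `1` on the ball `λ⁻¹|n| ≤ c₂` and `O((1 + |n|)^{-(d+1)})` off it. Since
`∏ᵢ (1 + |nᵢ|) ≤ (1 + |n|)^d`, this weight is dominated by a product of one-dimensional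
`p`-series with `p = (d + 1)/d > 1`.

For a general strictly increasing `a`, telescope `ψ` along the gap. Since `ψ x - ψ (x + s)`
decreases in `x` and `ρ` is `1`-Lipschitz in `a_j`, the `(n', j)` term is bounded by the sum of
the `a = id` terms over `m ∈ (a_{j-1}, a_j]`. These intervals are disjoint, so
`S((a_j)) ≤ S((j))`.
-/

open scoped BigOperators ENNReal

noncomputable section

open Finset

def invMulPow (C : ℝ) (d : ℕ) (y : ℝ) : ℝ := (C * y ^ d)⁻¹

section invMulPow

variable {C : ℝ} {d : ℕ}

lemma invMulPow_pos (hC : 0 < C) {y : ℝ} (hy : 0 < y) : 0 < invMulPow C d y := by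
  unfold invMulPow; positivity

lemma invMulPow_antitoneOn (hC : 0 < C) : AntitoneOn (invMulPow C d) (Set.Ioi 0) := by
  intro y (hy : 0 < y) z _ hyz
  unfold invMulPow
  gcongr

lemma invMulPow_sub_invMulPow_add (hC : 0 < C) {x s : ℝ} (hx : 0 < x) (hs : 0 ≤ s) :
    invMulPow C d x - invMulPow C d (x + s) =
      s * ∑ i ∈ range d, (C * ((x + s) ^ (d - i) * x ^ (i + 1)))⁻¹ := by
  have hxs : 0 < x + s := by linarith
  have hgeom : (∑ i ∈ range d, (x + s) ^ i * x ^ (d - 1 - i)) * s = (x + s) ^ d - x ^ d := by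
    simpa using geom_sum₂_mul (x + s) x d
  have hdiff : invMulPow C d x - invMulPow C d (x + s) =
      ((x + s) ^ d - x ^ d) * (C * (x ^ d * (x + s) ^ d))⁻¹ := by
    unfold invMulPow
    field_simp
  rw [hdiff, ← hgeom, sum_mul, sum_mul, mul_sum]
  refine sum_congr rfl fun i hi => ?_
  have hid : i < d := mem_range.mp hi
  rw [show x ^ d = x ^ (d - 1 - i) * x ^ (i + 1) by rw [← pow_add]; congr 1; omega,
    show (x + s) ^ d = (x + s) ^ i * (x + s) ^ (d - i) by rw [← pow_add]; congr 1; omega]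
  field_simp

lemma invMulPow_sub_invMulPow_add_anti (hC : 0 < C) {x y s : ℝ} (hy : 0 < y) (hyx : y ≤ x)
    (hs : 0 ≤ s) :
    invMulPow C d x - invMulPow C d (x + s) ≤ invMulPow C d y - invMulPow C d (y + s) := by
  rw [invMulPow_sub_invMulPow_add hC (hy.trans_le hyx) hs, invMulPow_sub_invMulPow_add hC hy hs]
  have : 0 ≤ x + s := by linarith
  gcongr

lemma invMulPow_sub_invMulPow_add_le (hC : 0 < C) {x s : ℝ} (hx : 0 < x) (hs : 0 ≤ s) :
    invMulPow C d x - invMulPow C d (x + s) ≤ s * d * (C * x ^ (d + 1))⁻¹ := by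
  rw [invMulPow_sub_invMulPow_add hC hx hs, mul_assoc]
  gcongr
  calc ∑ i ∈ range d, (C * ((x + s) ^ (d - i) * x ^ (i + 1)))⁻¹
      ≤ ∑ _i ∈ range d, (C * x ^ (d + 1))⁻¹ := by
        refine sum_le_sum fun i hi => ?_
        have hx' : x ^ (d + 1) = x ^ (d - i) * x ^ (i + 1) := by
          rw [← pow_add]; congr 1; have := mem_range.mp hi; omega
        rw [hx']
        gcongr
        linarith
    _ = d * (C * x ^ (d + 1))⁻¹ := by simp

end invMulPow

lemma AntitoneOn.sub_le_sum_sub {f : ℝ → ℝ} {x c : ℝ} (hf : AntitoneOn f (Set.Ici x))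
    (hc : 0 ≤ c) (n : ℕ) :
    f x - f (x + (n + 1 + c)) ≤ ∑ t ∈ range (n + 1), (f (x + t) - f (x + t + (1 + c))) := by
  induction n with
  | zero => simp [add_assoc]
  | succ n ih =>
    rw [sum_range_succ]
    have hn : (0 : ℝ) ≤ n := n.cast_nonneg
    have hmono : f (x + (n + 1 + c)) ≤ f (x + (n + 1)) :=
      hf (Set.mem_Ici.2 (by linarith)) (Set.mem_Ici.2 (by linarith)) (by linarith)
    rw [show x + ((n + 1 : ℕ) + 1 + c) = x + (n + 1) + (1 + c) by push_cast; ring]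
    push_cast
    linarith

lemma summable_one_add_abs_rpow_neg {p : ℝ} (hp : 1 < p) :
    Summable fun t : ℤ => (1 + |(t : ℝ)|) ^ (-p) := by
  have hnat : Summable fun n : ℕ => (1 + |((n : ℤ) : ℝ)|) ^ (-p) := by
    refine ((Real.summable_one_div_nat_add_rpow 1 p).mpr hp).congr fun n => ?_
    rw [Real.rpow_neg (by positivity), one_div, Int.cast_natCast, Nat.abs_cast,
      abs_of_nonneg (by positivity), add_comm]
  refine .of_nat_of_neg hnat (hnat.congr fun n => ?_)
  simp

lemma summable_prod_apply_of_nonneg {α : Type*} {f : α → ℝ} (hf₀ : ∀ a, 0 ≤ f a)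
    (hf : Summable f) (m : ℕ) : Summable fun v : Fin m → α => ∏ i, f (v i) := by
  induction m with
  | zero => exact .of_finite
  | succ m ih =>
    rw [← (Fin.consEquiv fun _ => α).summable_iff]
    refine (hf.mul_of_nonneg ih hf₀ fun v => prod_nonneg fun i _ => hf₀ _).congr fun q => ?_
    simp [Fin.prod_univ_succ]

lemma abs_le_latNorm {k : ℕ} (n : Fin k → ℤ) (i : Fin k) : |(n i : ℝ)| ≤ latNorm k n := by
  rw [latNorm, ← Real.sqrt_sq_eq_abs]
  exact Real.sqrt_le_sqrt (single_le_sum (f := fun i => (n i : ℝ) ^ 2)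
    (fun i _ => sq_nonneg _) (mem_univ i))

lemma one_add_latNorm_pos {k : ℕ} (n : Fin k → ℤ) : 0 < 1 + latNorm k n := by
  have : 0 ≤ latNorm k n := Real.sqrt_nonneg _
  positivity

lemma latNorm_cons {k : ℕ} (t : ℤ) (n' : Fin k → ℤ) :
    latNorm (k + 1) (Fin.cons t n') = Real.sqrt (latNorm k n' ^ 2 + (t : ℝ) ^ 2) := by
  rw [latNorm, latNorm, Real.sq_sqrt (sum_nonneg fun i _ => sq_nonneg _), Fin.sum_univ_succ,
    add_comm]
  simp

lemma summable_inv_one_add_latNorm_pow {d m : ℕ} (hdm : d < m) :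
    Summable fun n : Fin d → ℤ => ((1 + latNorm d n) ^ m)⁻¹ := by
  rcases Nat.eq_zero_or_pos d with rfl | hd
  · exact .of_finite
  set p : ℝ := m / d
  have hp : 1 < p := by rw [one_lt_div (by positivity)]; exact_mod_cast hdm
  refine (summable_prod_apply_of_nonneg (fun t => by positivity)
    (summable_one_add_abs_rpow_neg hp) d).of_nonneg_of_le
    (fun n => (inv_pos.2 (pow_pos (one_add_latNorm_pos n) m)).le) fun n => ?_
  have hprod : ∏ i, (1 + |(n i : ℝ)|) ≤ (1 + latNorm d n) ^ d := by
    refine (prod_le_prod (fun i _ => by positivity) fun i _ => ?_).trans_eq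
      (Fin.prod_const d (1 + latNorm d n))
    exact add_le_add_right (abs_le_latNorm n i) 1
  calc ((1 + latNorm d n) ^ m)⁻¹ = ((1 + latNorm d n) ^ d) ^ (-p) := by
        have hQ := (one_add_latNorm_pos n).le
        rw [Real.rpow_neg (by positivity), ← Real.rpow_natCast _ d, ← Real.rpow_mul hQ,
          show (d : ℝ) * p = m from mul_div_cancel₀ _ (by positivity), Real.rpow_natCast]
    _ ≤ (∏ i, (1 + |(n i : ℝ)|)) ^ (-p) :=
        Real.rpow_le_rpow_of_nonpos (prod_pos fun i _ => by positivity) hprod (by linarith)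
    _ = ∏ i, (1 + |(n i : ℝ)|) ^ (-p) :=
        (Real.finsetProd_rpow _ _ (fun i _ => by positivity) _).symm

lemma Finset.sum_Ioc_sub_eq_sum_range {M : Type*} [AddCommMonoid M] (f : ℤ → M) (b : ℤ)
    (n : ℕ) : ∑ m ∈ Ioc (b - n) b, f m = ∑ t ∈ range n, f (b - t) := by
  refine sum_nbij' (fun m => (b - m).toNat) (fun t => b - t) ?_ ?_ ?_ ?_ ?_ <;>
    grind

lemma tsum_sum_Ioc_le_tsum {a : ℤ → ℤ} (ha : StrictMono a) (f : ℤ → ℝ≥0∞) :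
    ∑' j, ∑ m ∈ Ioc (a (j - 1)) (a j), f m ≤ ∑' m, f m := by
  have hdisj : Set.univ.PairwiseDisjoint fun j => (Ioc (a (j - 1)) (a j) : Set ℤ) := by
    intro i _ j _ hij
    simp only [Function.onFun, coe_Ioc]
    rcases hij.lt_or_gt with h | h
    · exact Set.Ioc_disjoint_Ioc_of_le (ha.monotone (by omega))
    · exact (Set.Ioc_disjoint_Ioc_of_le (ha.monotone (by omega))).symm
  calc ∑' j, ∑ m ∈ Ioc (a (j - 1)) (a j), f m
      = ∑' j, ∑' m : (Ioc (a (j - 1)) (a j) : Set ℤ), f m := by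
        simp only [Finset.tsum_subtype']
    _ = ∑' m : ⋃ j, (Ioc (a (j - 1)) (a j) : Set ℤ), f m :=
        (ENNReal.tsum_biUnion hdisj).symm
    _ ≤ ∑' m, f m := ENNReal.tsum_comp_le_tsum_of_injective Subtype.val_injective f

lemma Cplus_eq_mul_max_pow {C c : ℝ} {d : ℕ} (hC : 0 ≤ C) (hc : 0 < c) (h : C * c ^ d = 1)
    (x : ℝ) : Cplus C d x = C * max x c ^ d := by
  unfold Cplus
  rcases le_total x c with hxc | hcx
  · rw [max_eq_right hxc, h, max_eq_right]
    rw [← h]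
    gcongr
    exact max_le hxc hc.le
  · rw [max_eq_left hcx, max_eq_left (hc.le.trans hcx), max_eq_left]
    rw [← h]
    gcongr

lemma Real.sqrt_add_sq_le {A : ℝ} (hA : 0 ≤ A) (u v : ℝ) :
    √(A + u ^ 2) ≤ √(A + v ^ 2) + |u - v| := by
  have hv : |v| ≤ √(A + v ^ 2) := Real.abs_le_sqrt (by linarith)
  have hsq : √(A + v ^ 2) ^ 2 = A + v ^ 2 := Real.sq_sqrt (by positivity)
  rw [Real.sqrt_le_left (by positivity)]
  nlinarith [mul_le_mul_of_nonneg_right hv (abs_nonneg (u - v)), abs_mul v (u - v),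
    le_abs_self (v * (u - v)), sq_abs (u - v)]

def truncRadius (c₁ c₂ lam : ℝ) {k : ℕ} (n' : Fin k → ℤ) (t : ℝ) : ℝ :=
  max (lam⁻¹ * Real.sqrt (latNorm k n' ^ 2 + t ^ 2)) c₂ - c₁

section truncRadius

variable {c₁ c₂ lam : ℝ} {k : ℕ}

lemma truncRadius_pos (hc₂ : c₁ < c₂) (n' : Fin k → ℤ) (t : ℝ) :
    0 < truncRadius c₁ c₂ lam n' t :=
  sub_pos.2 (hc₂.trans_le (le_max_right _ _))

lemma truncRadius_le_add_abs_sub (hlam : 1 ≤ lam) (n' : Fin k → ℤ) (u v : ℝ) :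
    truncRadius c₁ c₂ lam n' u ≤ truncRadius c₁ c₂ lam n' v + |u - v| := by
  have hsqrt := Real.sqrt_add_sq_le (sq_nonneg (latNorm k n')) u v
  have hscaled : lam⁻¹ * √(latNorm k n' ^ 2 + u ^ 2) ≤
      lam⁻¹ * √(latNorm k n' ^ 2 + v ^ 2) + |u - v| :=
    calc lam⁻¹ * √(latNorm k n' ^ 2 + u ^ 2)
        ≤ lam⁻¹ * √(latNorm k n' ^ 2 + v ^ 2) + lam⁻¹ * |u - v| := by
          rw [← mul_add]; gcongr
      _ ≤ lam⁻¹ * √(latNorm k n' ^ 2 + v ^ 2) + |u - v| := by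
          gcongr
          exact mul_le_of_le_one_left (abs_nonneg _) (inv_le_one_of_one_le₀ hlam)
  unfold truncRadius
  calc max (lam⁻¹ * √(latNorm k n' ^ 2 + u ^ 2)) c₂ - c₁
      ≤ max (lam⁻¹ * √(latNorm k n' ^ 2 + v ^ 2) + |u - v|) (c₂ + |u - v|) - c₁ := by
        gcongr
        exact le_add_of_nonneg_right (abs_nonneg _)
    _ = max (lam⁻¹ * √(latNorm k n' ^ 2 + v ^ 2)) c₂ - c₁ + |u - v| := by
        rw [max_add_add_right]; ring

end truncRadius

section Sterm

variable {d : ℕ} {C c₁ lam c₂ : ℝ}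

lemma Sterm_eq (hC : 0 < C) (hc₁ : 0 ≤ c₁) (hlam : 0 ≤ lam) (hc₂ : c₁ < c₂)
    (hc₂def : C * (c₂ - c₁) ^ d = 1) (a : ℤ → ℤ) (n' : Fin (d - 1) → ℤ) {j : ℤ}
    (hj : a (j - 1) < a j) :
    Sterm d C c₁ lam c₂ a n' j =
      invMulPow C d (truncRadius c₁ c₂ lam n' (a j)) -
        invMulPow C d (truncRadius c₁ c₂ lam n' (a j) + ((a j : ℝ) - a (j - 1) + 2 * c₁)) := by
  have hg : (0 : ℝ) < a j - a (j - 1) := by exact_mod_cast sub_pos.2 hj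
  set g : ℝ := (a j : ℝ) - a (j - 1)
  set r := lam⁻¹ * Real.sqrt (latNorm (d - 1) n' ^ 2 + (a j : ℝ) ^ 2)
  have hr : 0 ≤ r := by positivity
  have hmin : min ((C * (c₂ + g + c₁) ^ d)⁻¹) ((C * (r + g + c₁) ^ d)⁻¹) =
      invMulPow C d (max r c₂ - c₁ + (g + 2 * c₁)) := by
    rw [show max r c₂ - c₁ + (g + 2 * c₁) = max c₂ r + g + c₁ by rw [max_comm]; ring,
      ← max_add_add_right, ← max_add_add_right, (invMulPow_antitoneOn hC).map_max
      (Set.mem_Ioi.2 (by linarith)) (Set.mem_Ioi.2 (by linarith))]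
    rfl
  unfold Sterm truncRadius
  rw [Cplus_eq_mul_max_pow hC.le (sub_pos.2 hc₂) hc₂def, max_sub_sub_right, hmin]
  rfl

lemma Sterm_id_eq (hC : 0 < C) (hc₁ : 0 ≤ c₁) (hlam : 0 ≤ lam) (hc₂ : c₁ < c₂)
    (hc₂def : C * (c₂ - c₁) ^ d = 1) (n' : Fin (d - 1) → ℤ) (m : ℤ) :
    Sterm d C c₁ lam c₂ (fun i => i) n' m =
      invMulPow C d (truncRadius c₁ c₂ lam n' m) -
        invMulPow C d (truncRadius c₁ c₂ lam n' m + (1 + 2 * c₁)) := by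
  rw [Sterm_eq hC hc₁ hlam hc₂ hc₂def _ n' (sub_one_lt m)]
  push_cast
  ring_nf

lemma Sterm_id_nonneg (hC : 0 < C) (hc₁ : 0 ≤ c₁) (hlam : 0 ≤ lam) (hc₂ : c₁ < c₂)
    (hc₂def : C * (c₂ - c₁) ^ d = 1) (n' : Fin (d - 1) → ℤ) (m : ℤ) :
    0 ≤ Sterm d C c₁ lam c₂ (fun i => i) n' m := by
  have hρ := truncRadius_pos (lam := lam) hc₂ n' m
  rw [Sterm_id_eq hC hc₁ hlam hc₂ hc₂def, sub_nonneg]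
  exact invMulPow_antitoneOn hC hρ (Set.mem_Ioi.2 (by linarith)) (by linarith)

lemma Sterm_le_sum_Sterm_id (hC : 0 < C) (hc₁ : 0 ≤ c₁) (hlam : 1 ≤ lam) (hc₂ : c₁ < c₂)
    (hc₂def : C * (c₂ - c₁) ^ d = 1) (a : ℤ → ℤ) (n' : Fin (d - 1) → ℤ) {j : ℤ}
    (hj : a (j - 1) < a j) :
    Sterm d C c₁ lam c₂ a n' j ≤
      ∑ m ∈ Ioc (a (j - 1)) (a j), Sterm d C c₁ lam c₂ (fun i => i) n' m := by
  obtain ⟨g, hg⟩ : ∃ g : ℕ, a (j - 1) = a j - (g + 1 : ℕ) :=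
    ⟨(a j - a (j - 1) - 1).toNat, by omega⟩
  set ρ := truncRadius c₁ c₂ lam n' (a j)
  have hρ : 0 < ρ := truncRadius_pos hc₂ _ _
  have hanti : AntitoneOn (invMulPow C d) (Set.Ici ρ) :=
    (invMulPow_antitoneOn hC).mono fun x (hx : ρ ≤ x) => hρ.trans_le hx
  rw [Sterm_eq hC hc₁ (by linarith) hc₂ hc₂def a n' hj, hg, Finset.sum_Ioc_sub_eq_sum_range]
  push_cast
  calc invMulPow C d ρ - invMulPow C d (ρ + (a j - (a j - (g + 1)) + 2 * c₁))
      = invMulPow C d ρ - invMulPow C d (ρ + (g + 1 + 2 * c₁)) := by ring_nf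
    _ ≤ ∑ t ∈ range (g + 1), (invMulPow C d (ρ + t) - invMulPow C d (ρ + t + (1 + 2 * c₁))) :=
        hanti.sub_le_sum_sub (by linarith) g
    _ ≤ ∑ t ∈ range (g + 1), Sterm d C c₁ lam c₂ (fun i => i) n' (a j - t) := by
        refine sum_le_sum fun t _ => ?_
        rw [Sterm_id_eq hC hc₁ (by linarith) hc₂ hc₂def]
        have hshift := truncRadius_le_add_abs_sub (c₁ := c₁) (c₂ := c₂) hlam n'
          ((a j - t : ℤ) : ℝ) (a j)
        push_cast at hshift ⊢
        rw [show |(a j : ℝ) - t - a j| = t by simp] at hshift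
        exact invMulPow_sub_invMulPow_add_anti hC (truncRadius_pos hc₂ _ _) hshift (by linarith)

end Sterm

section Ssum

variable {C c₁ lam c₂ : ℝ}

lemma Ssum_le_Ssum_id {d : ℕ} (hC : 0 < C) (hc₁ : 0 ≤ c₁) (hlam : 1 ≤ lam) (hc₂ : c₁ < c₂)
    (hc₂def : C * (c₂ - c₁) ^ d = 1) {a : ℤ → ℤ} (ha : StrictMono a) :
    Ssum d C c₁ lam c₂ a ≤ Ssum d C c₁ lam c₂ (fun j => j) := by
  unfold Ssum
  rw [ENNReal.tsum_prod', ENNReal.tsum_prod']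
  refine ENNReal.tsum_le_tsum fun n' => le_trans (ENNReal.tsum_le_tsum fun j => ?_)
    (tsum_sum_Ioc_le_tsum ha _)
  rw [← ENNReal.ofReal_sum_of_nonneg fun m _ =>
    Sterm_id_nonneg hC hc₁ (by linarith) hc₂ hc₂def n' m]
  exact ENNReal.ofReal_le_ofReal
    (Sterm_le_sum_Sterm_id hC hc₁ hlam hc₂ hc₂def a n' (ha (sub_one_lt j)))

def latticeMajorant (d : ℕ) (C c₁ lam c₂ : ℝ) (n : Fin d → ℤ) : ℝ≥0∞ :=
  if lam⁻¹ * latNorm d n ≤ c₂ then (1 : ℝ≥0∞)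
  else ENNReal.ofReal ((C * (lam⁻¹ * latNorm d n - c₁) ^ d)⁻¹ -
    (C * (lam⁻¹ * latNorm d n + 1 + c₁) ^ d)⁻¹)

lemma ofReal_Sterm_id_le_latticeMajorant {k : ℕ} (hC : 0 < C) (hc₁ : 0 ≤ c₁) (hlam : 0 ≤ lam)
    (hc₂ : c₁ < c₂) (hc₂def : C * (c₂ - c₁) ^ (k + 1) = 1) (n' : Fin k → ℤ) (j : ℤ) :
    ENNReal.ofReal (Sterm (k + 1) C c₁ lam c₂ (fun i => i) n' j) ≤
      latticeMajorant (k + 1) C c₁ lam c₂ (Fin.cons j n') := by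
  rw [Sterm_id_eq hC hc₁ hlam hc₂ hc₂def, latticeMajorant, latNorm_cons]
  unfold truncRadius
  split_ifs with h
  -- `erw`: the radius lives on `Fin (k + 1 - 1)`, only definitionally `Fin k`
  · erw [max_eq_right h]
    have hpos := invMulPow_pos hC (d := k + 1) (y := c₂ - c₁ + (1 + 2 * c₁)) (by linarith)
    refine ENNReal.ofReal_le_one.2 ?_
    rw [invMulPow, hc₂def, inv_one]
    linarith
  · erw [max_eq_left (not_le.1 h).le]
    exact le_of_eq (congrArg ENNReal.ofReal (by unfold invMulPow; ring_nf))

lemma Ssum_id_le_tsum_latticeMajorant {k : ℕ} (hC : 0 < C) (hc₁ : 0 ≤ c₁) (hlam : 0 ≤ lam)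
    (hc₂ : c₁ < c₂) (hc₂def : C * (c₂ - c₁) ^ (k + 1) = 1) :
    Ssum (k + 1) C c₁ lam c₂ (fun j => j) ≤ ∑' n, latticeMajorant (k + 1) C c₁ lam c₂ n :=
  calc Ssum (k + 1) C c₁ lam c₂ (fun j => j)
      ≤ ∑' p : (Fin k → ℤ) × ℤ, latticeMajorant (k + 1) C c₁ lam c₂ (Fin.cons p.2 p.1) :=
        ENNReal.tsum_le_tsum fun p =>
          ofReal_Sterm_id_le_latticeMajorant hC hc₁ hlam hc₂ hc₂def p.1 p.2
    _ = ∑' n, latticeMajorant (k + 1) C c₁ lam c₂ n :=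
        ((Equiv.prodComm _ _).trans (Fin.consEquiv fun _ => ℤ)).tsum_eq _

end Ssum

section latticeMajorant

variable {d : ℕ} {C c₁ lam c₂ : ℝ}

lemma mul_one_add_le_inv_mul_sub (hc₁ : 0 ≤ c₁) (hlam : 1 ≤ lam) (hc₂ : c₁ < c₂) {Q : ℝ}
    (hQ : c₂ < lam⁻¹ * Q) : (c₂ - c₁) / ((1 + c₂) * lam) * (1 + Q) ≤ lam⁻¹ * Q - c₁ := by
  have hlam₀ : 0 < lam := by linarith
  have hc₂₀ : 0 < c₂ := hc₁.trans_lt hc₂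
  set r := lam⁻¹ * Q
  have hQr : Q = lam * r := by simp [r, hlam₀.ne']
  rw [div_mul_eq_mul_div, div_le_iff₀ (by positivity), hQr]
  nlinarith [mul_nonneg (sub_nonneg.2 hlam) (sub_nonneg.2 hc₂.le),
    mul_nonneg (mul_nonneg hc₁ hlam₀.le) (sub_nonneg.2 hQ.le),
    mul_nonneg hlam₀.le (sub_nonneg.2 hQ.le)]

lemma invMulPow_sub_le_of_lt (hC : 0 < C) (hc₁ : 0 ≤ c₁) (hlam : 1 ≤ lam) (hc₂ : c₁ < c₂)
    {Q : ℝ} (hQ : c₂ < lam⁻¹ * Q) :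
    invMulPow C d (lam⁻¹ * Q - c₁) - invMulPow C d (lam⁻¹ * Q + 1 + c₁) ≤
      (1 + 2 * c₁) * d * (C * ((c₂ - c₁) / ((1 + c₂) * lam)) ^ (d + 1))⁻¹ *
        ((1 + Q) ^ (d + 1))⁻¹ := by
  have hδ : 0 < (c₂ - c₁) / ((1 + c₂) * lam) := by
    have : 0 < c₂ := hc₁.trans_lt hc₂
    apply div_pos <;> nlinarith
  have hQ₀ : 0 < Q :=
    pos_of_mul_pos_right ((hc₁.trans_lt hc₂).trans hQ) (inv_nonneg.2 (by linarith))
  calc invMulPow C d (lam⁻¹ * Q - c₁) - invMulPow C d (lam⁻¹ * Q + 1 + c₁)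
      = invMulPow C d (lam⁻¹ * Q - c₁) - invMulPow C d (lam⁻¹ * Q - c₁ + (1 + 2 * c₁)) := by
        ring_nf
    _ ≤ (1 + 2 * c₁) * d * (C * (lam⁻¹ * Q - c₁) ^ (d + 1))⁻¹ :=
        invMulPow_sub_invMulPow_add_le hC (by linarith) (by linarith)
    _ ≤ (1 + 2 * c₁) * d * (C * ((c₂ - c₁) / ((1 + c₂) * lam) * (1 + Q)) ^ (d + 1))⁻¹ := by
        gcongr
        exact mul_one_add_le_inv_mul_sub hc₁ hlam hc₂ hQ
    _ = _ := by rw [mul_pow, ← mul_assoc, mul_inv (C * _)]; ring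

lemma exists_latticeMajorant_le (hC : 0 < C) (hc₁ : 0 ≤ c₁) (hlam : 1 ≤ lam) (hc₂ : c₁ < c₂) :
    ∃ K : ℝ, ∀ n : Fin d → ℤ,
      latticeMajorant d C c₁ lam c₂ n ≤ ENNReal.ofReal (K * ((1 + latNorm d n) ^ (d + 1))⁻¹) := by
  have hlam₀ : 0 < lam := by linarith
  refine ⟨max ((1 + 2 * c₁) * d * (C * ((c₂ - c₁) / ((1 + c₂) * lam)) ^ (d + 1))⁻¹)
    ((1 + lam * c₂) ^ (d + 1)), fun n => ?_⟩
  have hQ₀ := one_add_latNorm_pos n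
  have hw : 0 < ((1 + latNorm d n) ^ (d + 1))⁻¹ := by positivity
  unfold latticeMajorant
  split_ifs with h
  · have hQ : 1 + latNorm d n ≤ 1 + lam * c₂ := by
      have := (inv_mul_le_iff₀ hlam₀).1 h
      linarith
    have hR : 0 < (1 + lam * c₂) ^ (d + 1) := pow_pos (hQ₀.trans_le hQ) _
    refine ENNReal.one_le_ofReal.2 ?_
    calc (1 : ℝ) = (1 + lam * c₂) ^ (d + 1) * ((1 + lam * c₂) ^ (d + 1))⁻¹ :=
          (mul_inv_cancel₀ hR.ne').symm
      _ ≤ _ := mul_le_mul (le_max_right _ _)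
          (inv_anti₀ (pow_pos hQ₀ _) (pow_le_pow_left₀ hQ₀.le hQ _)) (inv_nonneg.2 hR.le)
          (le_max_of_le_right hR.le)
  · refine ENNReal.ofReal_le_ofReal ((invMulPow_sub_le_of_lt hC hc₁ hlam hc₂ (not_le.1 h)).trans ?_)
    exact mul_le_mul_of_nonneg_right (le_max_left _ _) hw.le

lemma tsum_latticeMajorant_lt_top (hC : 0 < C) (hc₁ : 0 ≤ c₁) (hlam : 1 ≤ lam)
    (hc₂ : c₁ < c₂) : ∑' n, latticeMajorant d C c₁ lam c₂ n < ⊤ := by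
  obtain ⟨K, hK⟩ := exists_latticeMajorant_le (d := d) hC hc₁ hlam hc₂
  exact (ENNReal.tsum_le_tsum hK).trans_lt
    ((summable_inv_one_add_latNorm_pow d.lt_succ_self).mul_left K).tsum_ofReal_lt_top

end latticeMajorant

/-- **Summability lemma (finiteness part)**: for `a_j = j` the sum `S((j))` is finite,
being bounded by `#{n ∈ ℤ^d : λ⁻¹|n| ≤ c₂}` plus a convergent tail sum; consequently
`S((a_j)) < ∞` for every strictly increasing integer sequence `(a_j)`. -/
theorem Ssum_id_finite (d : ℕ) (hd : 1 ≤ d) (C c₁ lam c₂ : ℝ)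
    (hC : 0 < C) (hc₁ : 0 ≤ c₁) (hlam : 1 ≤ lam) (hc₂ : c₁ < c₂)
    (hc₂def : C * (c₂ - c₁) ^ d = 1) :
    Ssum d C c₁ lam c₂ (fun j => j) ≤
      (∑' n : Fin d → ℤ,
        if lam⁻¹ * latNorm d n ≤ c₂ then (1 : ℝ≥0∞)
        else ENNReal.ofReal ((C * (lam⁻¹ * latNorm d n - c₁) ^ d)⁻¹ -
          (C * (lam⁻¹ * latNorm d n + 1 + c₁) ^ d)⁻¹)) ∧
    (∑' n : Fin d → ℤ,
        if lam⁻¹ * latNorm d n ≤ c₂ then (1 : ℝ≥0∞)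
        else ENNReal.ofReal ((C * (lam⁻¹ * latNorm d n - c₁) ^ d)⁻¹ -
          (C * (lam⁻¹ * latNorm d n + 1 + c₁) ^ d)⁻¹)) < ⊤ ∧
    (∀ a : ℤ → ℤ, StrictMono a → Ssum d C c₁ lam c₂ a < ⊤) := by
  obtain ⟨k, rfl⟩ : ∃ k, d = k + 1 := ⟨d - 1, by omega⟩
  have hid := Ssum_id_le_tsum_latticeMajorant hC hc₁ (zero_le_one.trans hlam) hc₂ hc₂def
  have hfin := tsum_latticeMajorant_lt_top (d := k + 1) hC hc₁ hlam hc₂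
  exact ⟨hid, hfin, fun a ha =>
    ((Ssum_le_Ssum_id hC hc₁ hlam hc₂ hc₂def ha).trans hid).trans_lt hfin⟩

end
end

section
/- (Discrete Luiro lemma, centered case) Let f_k → f in ℓ¹(ℤ^d). Then for every R > 0 there exists k₀ = k₀(R) such that for all k ≥ k₀ and every n ∈ ℤ^d with |n| ≤ R (Euclidean norm), one has Rf_k(n) ⊆ Rf(n); that is, every radius realizing the supremum defining Mf_k(n) also realizes the supremum defining Mf(n). -/
open scoped BigOperators

noncomputable section

/-- The canonical embedding of a lattice point of `ℤ^d` into `ℝ^d`. -/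
def latticeCoe (d : ℕ) (n : Fin d → ℤ) : EuclideanSpace ℝ (Fin d) :=
  WithLp.toLp 2 (fun i => (n i : ℝ))

/-- The dilated "ball" `Ω̄_r(x) = {y : r⁻¹ (y - x) ∈ closure Ω}` for `r > 0`,
with `Ω̄_0(x) = {x}`. -/
def omegaBall (d : ℕ) (Ω : Set (EuclideanSpace ℝ (Fin d)))
    (x : EuclideanSpace ℝ (Fin d)) (r : ℝ) : Set (EuclideanSpace ℝ (Fin d)) :=
  if r = 0 then {x} else {y | r⁻¹ • (y - x) ∈ closure Ω}

/-- The set of lattice points of `ℤ^d` lying in `Ω̄_r(x)`. -/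
def latticePts (d : ℕ) (Ω : Set (EuclideanSpace ℝ (Fin d)))
    (x : EuclideanSpace ℝ (Fin d)) (r : ℝ) : Set (Fin d → ℤ) :=
  {m | latticeCoe d m ∈ omegaBall d Ω x r}

/-- The centered average `A_r|f|(n) = N(r)⁻¹ Σ_{m ∈ ℤ^d ∩ Ω̄_r} |f(n+m)|`. -/
def cAvg (d : ℕ) (Ω : Set (EuclideanSpace ℝ (Fin d)))
    (f : (Fin d → ℤ) → ℝ) (n : Fin d → ℤ) (r : ℝ) : ℝ :=
  ((latticePts d Ω 0 r).ncard : ℝ)⁻¹ *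
    ∑' m : latticePts d Ω 0 r, |f (n + (m : Fin d → ℤ))|

/-- The centered discrete maximal function `Mf(n) = sup_{r ≥ 0} A_r|f|(n)`. -/
def cMax (d : ℕ) (Ω : Set (EuclideanSpace ℝ (Fin d)))
    (f : (Fin d → ℤ) → ℝ) (n : Fin d → ℤ) : ℝ :=
  ⨆ r : {r : ℝ // 0 ≤ r}, cAvg d Ω f n r.1

/-- The discrete gradient `∇g(n) = (g(n+e_1)-g(n), …, g(n+e_d)-g(n))` as a vector
in Euclidean space `ℝ^d`. -/
def dgrad (d : ℕ) (g : (Fin d → ℤ) → ℝ) (n : Fin d → ℤ) : EuclideanSpace ℝ (Fin d) :=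
  WithLp.toLp 2 (fun i => g (n + Pi.single i 1) - g n)


/-- The set of radii realizing the supremum in the centered maximal function at `n`. -/
def cRadii (d : ℕ) (Ω : Set (EuclideanSpace ℝ (Fin d)))
    (g : (Fin d → ℤ) → ℝ) (n : Fin d → ℤ) : Set ℝ :=
  {r | 0 ≤ r ∧ cMax d Ω g n = cAvg d Ω g n r}

/-!
For fixed `n` the lattice sets `ℤ^d ∩ Ω̄_r` increase with `r` (`Ω` convex with `0 ∈ Ω`), and an
average `A_r|g|(n) > Mg(n)/2` forces `N(r) < 2‖g‖₁ / Mg(n)`. A chain of finite sets of bounded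
cardinality is finite, so only finitely many averages exceed `Mg(n)/2`, and the non-maximal ones
stay below `Mg(n)` by a gap `δ > 0`. Every average moves by at most `‖f_k - g‖₁`, so once this is
`< δ/2` a radius maximal for `f_k` is within `δ` of maximal for `g`, hence maximal. The finitely
many lattice points with `|n| ≤ R` then admit a common `k₀`.
-/

open Filter Set

theorem IsChain.finite_of_ncard_le {α : Type*} {𝒮 : Set (Set α)} (h𝒮 : IsChain (· ⊆ ·) 𝒮)
    (hfin : ∀ s ∈ 𝒮, s.Finite) {C : ℕ} (hC : ∀ s ∈ 𝒮, s.ncard ≤ C) : 𝒮.Finite := by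
  refine Finite.of_finite_image ((finite_Iic C).subset (image_subset_iff.2 hC)) ?_
  intro s hs t ht hst
  rcases h𝒮.total hs ht with hst' | hts
  · exact eq_of_subset_of_ncard_le hst' hst.ge (hfin t ht)
  · exact (eq_of_subset_of_ncard_le hts hst.le (hfin s hs)).symm

theorem exists_lt_forall_le_of_finite {α : Type*} [LinearOrder α] {V : Set α} {c M : α}
    (hcM : c < M) (hV : {v ∈ V | c < v}.Finite) : ∃ m < M, ∀ v ∈ V, v < M → v ≤ m := by
  set F := insert c ({v ∈ V | c < v} ∩ Iio M)
  obtain ⟨m, hmF, hmax⟩ :=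
    exists_max_image F id ((hV.inter_of_left _).insert c) (insert_nonempty _ _)
  refine ⟨m, ?_, fun v hv hvM => ?_⟩
  · rcases hmF with rfl | ⟨-, hm⟩
    exacts [hcM, hm]
  · rcases le_or_gt v c with hvc | hcv
    · exact hvc.trans (hmax c (mem_insert _ _))
    · exact hmax v (mem_insert_of_mem _ ⟨⟨hv, hcv⟩, hvM⟩)

section SetAverage

variable {G : Type*} [AddGroup G]

/-- `cAvg d Ω g n r` is `setAvg (latticePts d Ω 0 r) g n` by definition. For infinite `S` the
junk value `S.ncard = 0` makes the average `0`. -/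
def setAvg (S : Set G) (g : G → ℝ) (n : G) : ℝ :=
  (S.ncard : ℝ)⁻¹ * ∑' m : S, |g (n + m)|

theorem setAvg_nonneg (S : Set G) (g : G → ℝ) (n : G) : 0 ≤ setAvg S g n :=
  mul_nonneg (inv_nonneg.2 (Nat.cast_nonneg _)) (tsum_nonneg fun _ => abs_nonneg _)

theorem summable_abs_comp_add_left {g : G → ℝ} (hg : Summable fun m => |g m|) (n : G) :
    Summable fun m => |g (n + m)| :=
  (Equiv.addLeft n).summable_iff.2 hg

theorem setAvg_le_inv_ncard_mul_tsum {g : G → ℝ} (hg : Summable fun m => |g m|)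
    (S : Set G) (n : G) : setAvg S g n ≤ (S.ncard : ℝ)⁻¹ * ∑' m, |g m| := by
  unfold setAvg
  gcongr
  calc ∑' m : S, |g (n + m)| ≤ ∑' m, |g (n + m)| :=
        (summable_abs_comp_add_left hg n).tsum_subtype_le _ S fun _ => abs_nonneg _
    _ = ∑' m, |g m| := (Equiv.addLeft n).tsum_eq fun m => |g m|

theorem setAvg_le_tsum {g : G → ℝ} (hg : Summable fun m => |g m|) (S : Set G) (n : G) :
    setAvg S g n ≤ ∑' m, |g m| :=
  (setAvg_le_inv_ncard_mul_tsum hg S n).trans <|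
    mul_le_of_le_one_left (tsum_nonneg fun _ => abs_nonneg _) (Nat.cast_inv_le_one _)

theorem setAvg_le_setAvg_add_tsum {f g : G → ℝ} (hf : Summable fun m => |f m|)
    (hg : Summable fun m => |g m|) (S : Set G) (n : G) :
    setAvg S f n ≤ setAvg S g n + ∑' m, |f m - g m| := by
  have hfg : Summable fun m => |f m - g m| := (hf.of_abs.sub hg.of_abs).abs
  have hsub (h : G → ℝ) (hh : Summable fun m => |h m|) : Summable fun m : S => |h (n + m)| :=
    (summable_abs_comp_add_left hh n).subtype S
  calc setAvg S f n ≤ setAvg S g n + setAvg S (fun m => f m - g m) n := by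
        rw [setAvg, setAvg, setAvg, ← mul_add,
          ← (hsub g hg).tsum_add (hsub (fun m => f m - g m) hfg)]
        refine mul_le_mul_of_nonneg_left (Summable.tsum_le_tsum (fun m => ?_) (hsub f hf)
          ((hsub g hg).add (hsub (fun m => f m - g m) hfg))) (by positivity)
        linarith [abs_sub_abs_le_abs_sub (f (n + m)) (g (n + m))]
    _ ≤ setAvg S g n + ∑' m, |f m - g m| := by
        gcongr
        exact setAvg_le_tsum hfg S n

theorem IsChain.exists_lt_forall_setAvg_le {𝒮 : Set (Set G)} (h𝒮 : IsChain (· ⊆ ·) 𝒮)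
    {g : G → ℝ} (hg : Summable fun m => |g m|) (n : G) (M : ℝ) :
    ∃ m < M, ∀ S ∈ 𝒮, setAvg S g n < M → setAvg S g n ≤ m := by
  rcases le_or_gt M 0 with hM | hM
  · exact ⟨M - 1, by linarith, fun S _ hS => by linarith [setAvg_nonneg S g n]⟩
  set 𝒮' := {S ∈ 𝒮 | M / 2 < setAvg S g n}
  have hbig {S} (hS : S ∈ 𝒮') : S.ncard ≠ 0 := by
    intro h0
    have hpos := hS.2
    rw [setAvg, h0, Nat.cast_zero, inv_zero, zero_mul] at hpos
    linarith
  have hcard : ∀ S ∈ 𝒮', S.ncard ≤ ⌈2 * (∑' m, |g m|) / M⌉₊ := by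
    intro S hS
    have hpos : (0 : ℝ) < S.ncard := by exact_mod_cast Nat.pos_of_ne_zero (hbig hS)
    have hlt := hS.2.trans_le (setAvg_le_inv_ncard_mul_tsum hg S n)
    rw [inv_mul_eq_div, lt_div_iff₀ hpos] at hlt
    have hle : (S.ncard : ℝ) ≤ 2 * (∑' m, |g m|) / M := by
      rw [le_div_iff₀ hM]
      linarith
    exact_mod_cast hle.trans (Nat.le_ceil _)
  have h𝒮' : 𝒮'.Finite := (h𝒮.mono (sep_subset _ _)).finite_of_ncard_le
    (fun S hS => finite_of_ncard_ne_zero (hbig hS)) hcard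
  have hV : {v ∈ (setAvg · g n) '' 𝒮 | M / 2 < v} ⊆ (setAvg · g n) '' 𝒮' := by
    rintro _ ⟨⟨S, hS, rfl⟩, hlt⟩
    exact ⟨S, ⟨hS, hlt⟩, rfl⟩
  obtain ⟨m, hmM, hm⟩ := exists_lt_forall_le_of_finite (half_lt_self hM) ((h𝒮'.image _).subset hV)
  exact ⟨m, hmM, fun S hS => hm _ (mem_image_of_mem _ hS)⟩

end SetAverage

section Lattice

variable {d : ℕ} {Ω : Set (EuclideanSpace ℝ (Fin d))}

theorem abs_le_norm_latticeCoe (m : Fin d → ℤ) (i : Fin d) : |(m i : ℝ)| ≤ ‖latticeCoe d m‖ := by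
  simpa [latticeCoe] using PiLp.norm_apply_le (latticeCoe d m) i

theorem finite_setOf_norm_latticeCoe_le (C : ℝ) :
    {m : Fin d → ℤ | ‖latticeCoe d m‖ ≤ C}.Finite := by
  refine (finite_Icc (fun _ => -⌈C⌉) (fun _ => ⌈C⌉)).subset fun m hm => ?_
  have hbound (i : Fin d) : |m i| ≤ ⌈C⌉ := by
    have : ((|m i| : ℤ) : ℝ) ≤ ⌈C⌉ := by
      rw [Int.cast_abs]
      exact (abs_le_norm_latticeCoe m i).trans (hm.trans (Int.le_ceil C))
    exact_mod_cast this
  exact ⟨fun i => (abs_le.1 (hbound i)).1, fun i => (abs_le.1 (hbound i)).2⟩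

theorem omegaBall_mono (hΩconv : Convex ℝ Ω) (hΩzero : (0 : EuclideanSpace ℝ (Fin d)) ∈ Ω)
    (x : EuclideanSpace ℝ (Fin d)) {r s : ℝ} (hr : 0 ≤ r) (hrs : r ≤ s) :
    omegaBall d Ω x r ⊆ omegaBall d Ω x s := by
  intro y hy
  rcases hr.eq_or_lt with rfl | hr
  · rw [omegaBall, if_pos rfl, mem_singleton_iff] at hy
    subst hy
    unfold omegaBall
    split_ifs
    · rfl
    · simpa using subset_closure hΩzero
  · have hs : 0 < s := hr.trans_le hrs
    rw [omegaBall, if_neg hr.ne'] at hy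
    rw [omegaBall, if_neg hs.ne']
    show s⁻¹ • (y - x) ∈ closure Ω
    have := hΩconv.closure.smul_mem_of_zero_mem (subset_closure hΩzero) hy
      ⟨div_nonneg hr.le hs.le, div_le_one_of_le₀ hrs hs.le⟩
    convert this using 1
    rw [smul_smul]
    field_simp

theorem isChain_range_latticePts (hΩconv : Convex ℝ Ω)
    (hΩzero : (0 : EuclideanSpace ℝ (Fin d)) ∈ Ω) (x : EuclideanSpace ℝ (Fin d)) :
    IsChain (· ⊆ ·) (range fun r : {r : ℝ // 0 ≤ r} => latticePts d Ω x r) :=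
  Monotone.isChain_range fun r _ hrs _ hm => omegaBall_mono hΩconv hΩzero x r.2 hrs hm

theorem cAvg_le_cMax {g : (Fin d → ℤ) → ℝ} (hg : Summable fun m => |g m|) (n : Fin d → ℤ)
    {r : ℝ} (hr : 0 ≤ r) : cAvg d Ω g n r ≤ cMax d Ω g n :=
  le_ciSup (f := fun r : {r : ℝ // 0 ≤ r} => cAvg d Ω g n r)
    ⟨∑' m, |g m|, by rintro _ ⟨r, rfl⟩; exact setAvg_le_tsum hg _ n⟩ ⟨r, hr⟩

theorem cMax_le_cMax_add_tsum {f g : (Fin d → ℤ) → ℝ} (hf : Summable fun m => |f m|)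
    (hg : Summable fun m => |g m|) (n : Fin d → ℤ) :
    cMax d Ω g n ≤ cMax d Ω f n + ∑' m, |f m - g m| := by
  refine ciSup_le fun r => ?_
  calc cAvg d Ω g n r ≤ cAvg d Ω f n r + ∑' m, |g m - f m| :=
        setAvg_le_setAvg_add_tsum hg hf _ n
    _ ≤ cMax d Ω f n + ∑' m, |f m - g m| := by
        simp_rw [abs_sub_comm (g _)]
        gcongr
        exact cAvg_le_cMax hf n r.2

theorem exists_pos_forall_cRadii_subset (hΩconv : Convex ℝ Ω)
    (hΩzero : (0 : EuclideanSpace ℝ (Fin d)) ∈ Ω) {g : (Fin d → ℤ) → ℝ}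
    (hg : Summable fun m => |g m|) (n : Fin d → ℤ) :
    ∃ ε > 0, ∀ f : (Fin d → ℤ) → ℝ, Summable (fun m => |f m|) →
      ∑' m, |f m - g m| < ε → cRadii d Ω f n ⊆ cRadii d Ω g n := by
  obtain ⟨m, hm, hgap⟩ := (isChain_range_latticePts hΩconv hΩzero 0).exists_lt_forall_setAvg_le
    hg n (cMax d Ω g n)
  refine ⟨(cMax d Ω g n - m) / 2, by linarith, fun f hf hfg r ⟨hr, hfr⟩ => ⟨hr, ?_⟩⟩
  have hrf : cAvg d Ω f n r ≤ cAvg d Ω g n r + ∑' m, |f m - g m| :=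
    setAvg_le_setAvg_add_tsum hf hg _ n
  have hMg := cMax_le_cMax_add_tsum (Ω := Ω) hf hg n
  by_contra hne
  have := hgap _ ⟨⟨r, hr⟩, rfl⟩ ((cAvg_le_cMax hg n hr).lt_of_ne' hne)
  change cAvg d Ω g n r ≤ m at this
  linarith

end Lattice

theorem centered_radii_subset_general (d : ℕ)
    (Ω : Set (EuclideanSpace ℝ (Fin d))) (hΩconv : Convex ℝ Ω)
    (hΩzero : (0 : EuclideanSpace ℝ (Fin d)) ∈ Ω)
    (f : ℕ → (Fin d → ℤ) → ℝ) (g : (Fin d → ℤ) → ℝ)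
    (hf : ∀ k, Summable (fun n => |f k n|)) (hg : Summable (fun n => |g n|))
    (hconv : Filter.Tendsto (fun k => ∑' n, |f k n - g n|) Filter.atTop (nhds 0)) :
    ∀ R : ℝ, 0 < R → ∃ k₀ : ℕ, ∀ k ≥ k₀, ∀ n : Fin d → ℤ,
      ‖latticeCoe d n‖ ≤ R → cRadii d Ω (f k) n ⊆ cRadii d Ω g n := by
  intro R _
  have hnear (n : Fin d → ℤ) : ∀ᶠ k in atTop, cRadii d Ω (f k) n ⊆ cRadii d Ω g n := by
    obtain ⟨ε, hε, hsub⟩ := exists_pos_forall_cRadii_subset hΩconv hΩzero hg n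
    filter_upwards [hconv.eventually_lt_const hε] with k hk using hsub (f k) (hf k) hk
  obtain ⟨k₀, hk₀⟩ := eventually_atTop.1 <|
    (eventually_all_finite (finite_setOf_norm_latticeCoe_le R)).2 fun n _ => hnear n
  exact ⟨k₀, fun k hk n hn => hk₀ k hk n hn⟩

/-- **Discrete Luiro lemma (centered case)**: if `f_k → f` in `ℓ¹(ℤ^d)` then for each
`R > 0` there is `k₀` such that for `k ≥ k₀` and all lattice points `n` with `|n| ≤ R`
we have `Rf_k(n) ⊆ Rf(n)`. -/
theorem centered_radii_subset (d : ℕ) (hd : 1 ≤ d)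
    (Ω : Set (EuclideanSpace ℝ (Fin d))) (hΩopen : IsOpen Ω)
    (hΩbdd : Bornology.IsBounded Ω) (hΩconv : Convex ℝ Ω)
    (hΩzero : (0 : EuclideanSpace ℝ (Fin d)) ∈ Ω)
    (f : ℕ → (Fin d → ℤ) → ℝ) (g : (Fin d → ℤ) → ℝ)
    (hf : ∀ k, Summable (fun n => |f k n|)) (hg : Summable (fun n => |g n|))
    (hconv : Filter.Tendsto (fun k => ∑' n, |f k n - g n|) Filter.atTop (nhds 0)) :
    ∀ R : ℝ, 0 < R → ∃ k₀ : ℕ, ∀ k ≥ k₀, ∀ n : Fin d → ℤ,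
      ‖latticeCoe d n‖ ≤ R → cRadii d Ω (f k) n ⊆ cRadii d Ω g n :=
  centered_radii_subset_general d Ω hΩconv hΩzero f g hf hg hconv

end
end

section
/- For every f ∈ ℓ¹(ℤ^d) and every n ∈ ℤ^d, the supremum defining the non-centered discrete maximal function is attained: there exist x ∈ ℝ^d and r ≥ 0 with n ∈ Ω̄_r(x) such that M̃f(n) = N(x, r)⁻¹ Σ_{m ∈ ℤ^d ∩ Ω̄_r(x)} |f(m)|. -/
open scoped BigOperators

noncomputable section

/-- The non-centered average `A_{(x,r)}|f|(n) = N(x,r)⁻¹ Σ_{m ∈ ℤ^d ∩ Ω̄_r(x)} |f(m)|`. -/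
def ncAvg (d : ℕ) (Ω : Set (EuclideanSpace ℝ (Fin d)))
    (f : (Fin d → ℤ) → ℝ) (x : EuclideanSpace ℝ (Fin d)) (r : ℝ) : ℝ :=
  ((latticePts d Ω x r).ncard : ℝ)⁻¹ *
    ∑' m : latticePts d Ω x r, |f (m : Fin d → ℤ)|

/-- The non-centered discrete maximal function `M̃f(n)`, the supremum of the averages
`A_{(x,r)}|f|(n)` over all `x ∈ ℝ^d`, `r ≥ 0` with `n ∈ Ω̄_r(x)`. -/
def ncMax (d : ℕ) (Ω : Set (EuclideanSpace ℝ (Fin d)))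
    (f : (Fin d → ℤ) → ℝ) (n : Fin d → ℤ) : ℝ :=
  ⨆ p : {p : EuclideanSpace ℝ (Fin d) × ℝ //
          0 ≤ p.2 ∧ latticeCoe d n ∈ omegaBall d Ω p.1 p.2},
    ncAvg d Ω f p.1.1 p.1.2

/-! Every average is at most `‖f‖₁ / N(x, r)`, so an average above `M̃f(n) / 2 > 0` comes from a
ball with boundedly many lattice points. As `Ω` contains a ball around `0`, such a ball has bounded
radius, and as it contains `n`, its lattice points lie in a fixed finite set around `n`. Hence
only finitely many values of the average exceed `M̃f(n) / 2`, and the largest is the supremum.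
When `M̃f(n) = 0` the degenerate ball `{n}` attains it. -/

theorem exists_eq_ciSup_of_finite_image_gt {ι : Type*} [hι : Nonempty ι] {g : ι → ℝ}
    (hbdd : BddAbove (Set.range g)) {t : ℝ} (ht : t < ⨆ i, g i)
    (hfin : (g '' {i | t < g i}).Finite) : ∃ i, g i = ⨆ i, g i := by
  obtain ⟨i₀, hi₀⟩ := exists_lt_of_lt_ciSup ht
  obtain ⟨_, ⟨i, hi, rfl⟩, hmax⟩ := Set.exists_max_image _ id hfin ⟨g i₀, i₀, hi₀, rfl⟩
  refine ⟨i, le_antisymm (le_ciSup hbdd i) (ciSup_le fun j => ?_)⟩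
  by_cases hj : t < g j
  · exact hmax _ ⟨j, hj, rfl⟩
  · exact (not_lt.mp hj).trans hi.le

section Lattice

variable {d : ℕ}

theorem latticeCoe_add_single (c : Fin d → ℤ) (i : Fin d) (k : ℤ) :
    latticeCoe d (c + Pi.single i k) = latticeCoe d c + PiLp.single 2 i (k : ℝ) := by
  ext j
  by_cases h : j = i
  · subst h; simp [latticeCoe]
  · simp [latticeCoe, h]

theorem finite_preimage_latticeCoe_closedBall (y : EuclideanSpace ℝ (Fin d)) (ρ : ℝ) :
    (latticeCoe d ⁻¹' Metric.closedBall y ρ).Finite := by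
  refine (Set.finite_Icc (fun i => ⌈y i - ρ⌉) (fun i => ⌊y i + ρ⌋)).subset fun m hm => ?_
  have hcoord (i : Fin d) : |(m i : ℝ) - y i| ≤ ρ := by
    simpa [latticeCoe] using (PiLp.norm_apply_le (latticeCoe d m - y) i).trans hm
  exact ⟨fun i => Int.ceil_le.mpr (by linarith [(abs_le.mp (hcoord i)).1]),
    fun i => Int.le_floor.mpr (by linarith [(abs_le.mp (hcoord i)).2])⟩

theorem norm_latticeCoe_ceil_sub_le (x : EuclideanSpace ℝ (Fin d)) :
    ‖latticeCoe d (fun i => ⌈x i⌉) - x‖ ≤ √d := by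
  rw [EuclideanSpace.norm_eq]
  refine Real.sqrt_le_sqrt ?_
  calc ∑ i, ‖(latticeCoe d (fun i => ⌈x i⌉) - x) i‖ ^ 2 ≤ ∑ _i : Fin d, (1 : ℝ) := by
        refine Finset.sum_le_sum fun i _ => ?_
        have h0 : 0 ≤ (⌈x i⌉ : ℝ) - x i := sub_nonneg.mpr (Int.le_ceil _)
        have h1 : (⌈x i⌉ : ℝ) - x i ≤ 1 := by linarith [Int.ceil_lt_add_one (x i)]
        have hi : (latticeCoe d (fun i => ⌈x i⌉) - x) i = ⌈x i⌉ - x i := by simp [latticeCoe]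
        rw [hi, Real.norm_eq_abs, sq_abs]
        exact pow_le_one₀ h0 h1
    _ = d := by simp

/-- The lattice points `⌈x⌉ + k e₀`, `k < N`, all lie within `N + √d` of `x`. -/
theorem le_ncard_preimage_latticeCoe (hd : 1 ≤ d) {S : Set (EuclideanSpace ℝ (Fin d))}
    (hS : (latticeCoe d ⁻¹' S).Finite) (x : EuclideanSpace ℝ (Fin d)) (N : ℕ)
    (hball : Metric.closedBall x (N + √d) ⊆ S) : N ≤ (latticeCoe d ⁻¹' S).ncard := by
  let i₀ : Fin d := ⟨0, hd⟩
  let pt : ℕ → Fin d → ℤ := fun k => (fun i => ⌈x i⌉) + Pi.single i₀ (k : ℤ)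
  refine Set.le_ncard_of_inj_on_range pt (fun k hk => hball ?_)
    (fun k _ l _ h => by simpa [pt] using congrFun h i₀) hS
  rw [Metric.mem_closedBall, dist_eq_norm, latticeCoe_add_single, add_sub_right_comm]
  calc _ ≤ ‖latticeCoe d (fun i => ⌈x i⌉) - x‖ + ‖PiLp.single 2 i₀ ((k : ℤ) : ℝ)‖ :=
        norm_add_le _ _
    _ ≤ √d + N := by
        rw [PiLp.norm_single]
        gcongr
        · exact norm_latticeCoe_ceil_sub_le x
        · simpa using hk.le
    _ = N + √d := add_comm _ _

end Lattice

section OmegaBall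

variable {d : ℕ} {Ω : Set (EuclideanSpace ℝ (Fin d))} {x : EuclideanSpace ℝ (Fin d)} {r : ℝ}

theorem omegaBall_subset_closedBall {C : ℝ} (hC : closure Ω ⊆ Metric.closedBall 0 C)
    (hr : 0 ≤ r) : omegaBall d Ω x r ⊆ Metric.closedBall x (r * C) := by
  intro y hy
  rcases hr.eq_or_lt with rfl | hr
  · simp_all [omegaBall]
  · have hy' := hC (by simpa [omegaBall, hr.ne'] using hy)
    rw [mem_closedBall_zero_iff, norm_smul, norm_inv, Real.norm_of_nonneg hr.le,
      inv_mul_le_iff₀ hr] at hy'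
    rwa [Metric.mem_closedBall, dist_eq_norm]

theorem closedBall_subset_omegaBall {δ : ℝ} (hδ : Metric.closedBall 0 δ ⊆ closure Ω)
    (hr : 0 < r) : Metric.closedBall x (r * δ) ⊆ omegaBall d Ω x r := by
  intro y hy
  rw [Metric.mem_closedBall, dist_eq_norm] at hy
  simp only [omegaBall, hr.ne', if_false]
  refine hδ ?_
  rw [mem_closedBall_zero_iff, norm_smul, norm_inv, Real.norm_of_nonneg hr.le,
    inv_mul_le_iff₀ hr]
  exact hy

theorem finite_latticePts {C : ℝ} (hC : closure Ω ⊆ Metric.closedBall 0 C) (hr : 0 ≤ r) :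
    (latticePts d Ω x r).Finite :=
  (finite_preimage_latticeCoe_closedBall x (r * C)).subset
    (Set.preimage_mono (omegaBall_subset_closedBall hC hr))

/-- Few lattice points force a small radius, because `Ω̄_r(x)` contains the Euclidean ball of
radius `r δ` around `x`. -/
theorem latticePts_subset_closedBall_of_ncard_lt (hd : 1 ≤ d) {C δ : ℝ}
    (hC : closure Ω ⊆ Metric.closedBall 0 C) (hδ : Metric.closedBall 0 δ ⊆ closure Ω)
    (hδ₀ : 0 < δ) (hr : 0 ≤ r) {n : Fin d → ℤ} (hn : n ∈ latticePts d Ω x r) {N : ℕ}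
    (hN : (latticePts d Ω x r).ncard < N) :
    latticePts d Ω x r ⊆
      latticeCoe d ⁻¹' Metric.closedBall (latticeCoe d n) (2 * ((N + √d) / δ * C)) := by
  have hC₀ : 0 ≤ C := Metric.nonempty_closedBall.mp
    ⟨0, hC (hδ (Metric.mem_closedBall_self hδ₀.le))⟩
  have hrN : r ≤ (N + √d) / δ := by
    rw [le_div_iff₀ hδ₀]
    by_contra! hbig
    have hr₀ : 0 < r :=
      pos_of_mul_pos_left ((by positivity : (0 : ℝ) ≤ N + √d).trans_lt hbig) hδ₀.le
    exact hN.not_ge (le_ncard_preimage_latticeCoe hd (finite_latticePts hC hr) x N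
      ((Metric.closedBall_subset_closedBall hbig.le).trans (closedBall_subset_omegaBall hδ hr₀)))
  intro m hm
  have hball (k : Fin d → ℤ) (hk : k ∈ latticePts d Ω x r) :
      dist (latticeCoe d k) x ≤ (N + √d) / δ * C :=
    (omegaBall_subset_closedBall hC hr hk).trans (by gcongr)
  calc dist (latticeCoe d m) (latticeCoe d n)
      ≤ dist (latticeCoe d m) x + dist (latticeCoe d n) x := dist_triangle_right _ _ _
    _ ≤ 2 * ((N + √d) / δ * C) := by linarith [hball m hm, hball n hn]

end OmegaBall

section Averages

variable {d : ℕ} {Ω : Set (EuclideanSpace ℝ (Fin d))} {f : (Fin d → ℤ) → ℝ}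
  {x : EuclideanSpace ℝ (Fin d)} {r : ℝ}

theorem ncAvg_nonneg : 0 ≤ ncAvg d Ω f x r :=
  mul_nonneg (by positivity) (tsum_nonneg fun _ => abs_nonneg _)

theorem ncAvg_mul_ncard_le (hf : Summable fun m => |f m|) :
    ncAvg d Ω f x r * (latticePts d Ω x r).ncard ≤ ∑' m, |f m| := by
  have hsum := hf.tsum_subtype_le _ (latticePts d Ω x r) fun m => abs_nonneg (f m)
  rcases Nat.eq_zero_or_pos (latticePts d Ω x r).ncard with h | h
  · simpa [h] using tsum_nonneg fun m => abs_nonneg (f m)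
  · rwa [ncAvg, mul_comm, ← mul_assoc, mul_inv_cancel₀ (by positivity), one_mul]

theorem ncAvg_le_tsum (hf : Summable fun m => |f m|) : ncAvg d Ω f x r ≤ ∑' m, |f m| := by
  rcases Nat.eq_zero_or_pos (latticePts d Ω x r).ncard with h | h
  · simpa [ncAvg, h] using tsum_nonneg fun m => abs_nonneg (f m)
  · calc ncAvg d Ω f x r ≤ ncAvg d Ω f x r * (latticePts d Ω x r).ncard :=
          le_mul_of_one_le_right ncAvg_nonneg (by exact_mod_cast h)
      _ ≤ ∑' m, |f m| := ncAvg_mul_ncard_le hf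

theorem ncard_latticePts_le_of_lt_ncAvg (hf : Summable fun m => |f m|) {t : ℝ} (ht : 0 < t)
    (htr : t < ncAvg d Ω f x r) : ((latticePts d Ω x r).ncard : ℝ) ≤ (∑' m, |f m|) / t := by
  rw [le_div_iff₀ ht, mul_comm]
  exact (mul_le_mul_of_nonneg_right htr.le (by positivity)).trans (ncAvg_mul_ncard_le hf)

theorem bddAbove_ncAvg (hf : Summable fun m => |f m|) (n : Fin d → ℤ) :
    BddAbove (Set.range fun p : {p : EuclideanSpace ℝ (Fin d) × ℝ //
      0 ≤ p.2 ∧ latticeCoe d n ∈ omegaBall d Ω p.1 p.2} => ncAvg d Ω f p.1.1 p.1.2) :=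
  ⟨_, Set.forall_mem_range.mpr fun _ => ncAvg_le_tsum hf⟩

theorem ncAvg_le_ncMax (hf : Summable fun m => |f m|) {n : Fin d → ℤ} (hr : 0 ≤ r)
    (hn : latticeCoe d n ∈ omegaBall d Ω x r) : ncAvg d Ω f x r ≤ ncMax d Ω f n :=
  le_ciSup (bddAbove_ncAvg hf n) ⟨(x, r), hr, hn⟩

end Averages

theorem finite_image_ncAvg_gt {d : ℕ} (hd : 1 ≤ d) {Ω : Set (EuclideanSpace ℝ (Fin d))}
    {C δ : ℝ}
    (hC : closure Ω ⊆ Metric.closedBall 0 C) (hδ : Metric.closedBall 0 δ ⊆ closure Ω)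
    (hδ₀ : 0 < δ) {f : (Fin d → ℤ) → ℝ} (hf : Summable fun m => |f m|) (n : Fin d → ℤ)
    {t : ℝ} (ht : 0 < t) :
    ((fun p : EuclideanSpace ℝ (Fin d) × ℝ => ncAvg d Ω f p.1 p.2) ''
      {p | 0 ≤ p.2 ∧ n ∈ latticePts d Ω p.1 p.2 ∧ t < ncAvg d Ω f p.1 p.2}).Finite := by
  set N := ⌊(∑' m, |f m|) / t⌋₊ + 1
  refine (((finite_preimage_latticeCoe_closedBall (latticeCoe d n)
    (2 * ((N + √d) / δ * C))).finite_subsets.image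
      fun S : Set (Fin d → ℤ) => (S.ncard : ℝ)⁻¹ * ∑' m : S, |f m|)).subset ?_
  rintro _ ⟨⟨x, r⟩, ⟨hr, hn, htr⟩, rfl⟩
  have hN : (latticePts d Ω x r).ncard < N := by
    have := (ncard_latticePts_le_of_lt_ncAvg hf ht htr).trans_lt (Nat.lt_floor_add_one _)
    exact_mod_cast this
  exact ⟨latticePts d Ω x r, latticePts_subset_closedBall_of_ncard_lt hd hC hδ hδ₀ hr hn hN, rfl⟩

theorem noncentered_sup_attained_general (d : ℕ) (hd : 1 ≤ d)
    (Ω : Set (EuclideanSpace ℝ (Fin d))) (hΩopen : IsOpen Ω)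
    (hΩbdd : Bornology.IsBounded Ω)
    (hΩzero : (0 : EuclideanSpace ℝ (Fin d)) ∈ Ω)
    (f : (Fin d → ℤ) → ℝ) (hf : Summable (fun n => |f n|)) (n : Fin d → ℤ) :
    ∃ (x : EuclideanSpace ℝ (Fin d)) (r : ℝ), 0 ≤ r ∧
      latticeCoe d n ∈ omegaBall d Ω x r ∧ ncMax d Ω f n = ncAvg d Ω f x r := by
  obtain ⟨C, hC⟩ := hΩbdd.closure.subset_closedBall 0
  obtain ⟨δ, hδ₀, hδΩ⟩ := Metric.isOpen_iff.mp hΩopen 0 hΩzero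
  have hδ : Metric.closedBall 0 δ ⊆ closure Ω :=
    closure_ball (0 : EuclideanSpace ℝ (Fin d)) hδ₀.ne' ▸ closure_mono hδΩ
  have hn : latticeCoe d n ∈ omegaBall d Ω (latticeCoe d n) 0 := by simp [omegaBall]
  rcases le_or_gt (ncMax d Ω f n) 0 with h0 | h0
  · exact ⟨latticeCoe d n, 0, le_rfl, hn,
      le_antisymm (h0.trans ncAvg_nonneg) (ncAvg_le_ncMax hf le_rfl hn)⟩
  · obtain ⟨p, hp⟩ := exists_eq_ciSup_of_finite_image_gt (hι := ⟨⟨(_, 0), le_rfl, hn⟩⟩)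
      (bddAbove_ncAvg hf n) (half_lt_self h0)
      ((finite_image_ncAvg_gt hd hC hδ hδ₀ hf n (half_pos h0)).subset
        (by rintro _ ⟨p, hp, rfl⟩; exact ⟨p.1, ⟨p.2.1, p.2.2, hp⟩, rfl⟩))
    exact ⟨p.1.1, p.1.2, p.2.1, p.2.2, hp.symm⟩

/-- **Attainment of the supremum, non-centered case**: for `f ∈ ℓ¹(ℤ^d)` and `n ∈ ℤ^d`
there is a pair `(x, r)` with `r ≥ 0` and `n ∈ Ω̄_r(x)` realizing the supremum
defining `M̃f(n)`. -/
theorem noncentered_sup_attained (d : ℕ) (hd : 1 ≤ d)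
    (Ω : Set (EuclideanSpace ℝ (Fin d))) (hΩopen : IsOpen Ω)
    (hΩbdd : Bornology.IsBounded Ω) (hΩconv : Convex ℝ Ω)
    (hΩzero : (0 : EuclideanSpace ℝ (Fin d)) ∈ Ω)
    (f : (Fin d → ℤ) → ℝ) (hf : Summable (fun n => |f n|)) (n : Fin d → ℤ) :
    ∃ (x : EuclideanSpace ℝ (Fin d)) (r : ℝ), 0 ≤ r ∧
      latticeCoe d n ∈ omegaBall d Ω x r ∧ ncMax d Ω f n = ncAvg d Ω f x r :=
  noncentered_sup_attained_general d hd Ω hΩopen hΩbdd hΩzero f hf n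

end
end
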